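/- arXiv:1310.1662 — 2 statements merged into one kernel-verified Lean document; each statement's English description precedes it below -/
import Mathlib

section
/- For every odd prime power q, the cardinalities of the 𝔽_q-rational point sets satisfy |Z(𝔽_q)| = (q − 1)·|F(𝔽_q)| + 2q + 2. -/
/-!
Write a point of `ℙ⁷` as `(Y, u, w)` with `u = (X₀, X₁)` and `w = (X₂, X₃)`. When `2 ≠ 0`, the
equations of `Z` say exactly that the outer product `u wᵀ` is a `2 × 2` matrix `M(Y)` with entries
quadratic in `Y`, where `16 det M(Y) = -(Y₀⁴ - Y₁⁴ + Y₂⁴ - Y₃⁴)` and `M(Y) = 0` only for `Y = 0`.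
A nonzero `2 × 2` matrix is an outer product iff its determinant vanishes, and then in exactly
`q - 1` ways, `(u, w) ↦ (t u, t⁻¹ w)`. Counting the nonzero points of the cone over `Z` fibrewise
over `Y`, where the fibre over `Y = 0` (`u = 0` or `w = 0`) has `2(q² - 1)` points, gives
`(q - 1)|Z| = 2(q² - 1) + (q - 1)²|F|`.
-/

open scoped LinearAlgebra.Projectivization
open Projectivization Matrix

/-- The Fermat quartic condition on `ℙ³`: `z₀⁴ - z₁⁴ + z₂⁴ - z₃⁴ = 0`. -/
def FermatCond {F : Type*} [Field F] (z : Fin 4 → F) : Prop :=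
  z 0 ^ 4 - z 1 ^ 4 + z 2 ^ 4 - z 3 ^ 4 = 0

/-- The defining condition of the Satake model `Z ⊂ ℙ⁷` in coordinates
`[Y₀ : Y₁ : Y₂ : Y₃ : X₀ : X₁ : X₂ : X₃] = [v 0 : ⋯ : v 7]`. -/
def SatakeCond {F : Type*} [Field F] (v : Fin 8 → F) : Prop :=
  v 0 ^ 2 = 2 * (v 4 * v 7 + v 5 * v 6) ∧
  v 1 ^ 2 = 2 * (v 4 * v 7 - v 5 * v 6) ∧
  v 2 ^ 2 = 2 * (v 4 * v 6 - v 5 * v 7) ∧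
  v 3 ^ 2 = 2 * (v 4 * v 6 + v 5 * v 7)

namespace Projectivization

variable {k V : Type*} [DivisionRing k] [AddCommGroup V] [Module k V]

theorem card_nonzero_subtype (C : V → Prop) (hC : ∀ (t : kˣ) (v : V), C v → C (t • v)) :
    Nat.card {v : V // v ≠ 0 ∧ C v} = Nat.card {p : ℙ k V // C p.rep} * Nat.card kˣ := by
  have hCrep (v : V) (hv : v ≠ 0) : C v ↔ C (mk k v hv).rep := by
    obtain ⟨a, ha⟩ := exists_smul_eq_mk_rep k v hv
    refine ⟨fun h ↦ ha ▸ hC a v h, fun h ↦ ?_⟩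
    simpa [← ha] using hC a⁻¹ _ h
  let e : {v : V // v ≠ 0 ∧ C v} ≃ {x : ℙ k V × kˣ // C x.1.rep} :=
    (Equiv.subtypeSubtypeEquivSubtypeInter (· ≠ 0) C).symm.trans <|
      Equiv.subtypeEquiv (nonZeroEquivProjectivizationProdUnits k V) fun v ↦ hCrep v.1 v.2
  rw [Nat.card_congr (e.trans (Equiv.prodSubtypeFstEquivSubtypeProd
    (p := fun p : ℙ k V ↦ C p.rep))), Nat.card_prod]

end Projectivization

namespace Matrix

variable {K m n : Type*} [Field K]

theorem exists_vecMulVec_eq_of_mul_eq_mul (M : Matrix m n K)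
    (h : ∀ i j k l, M i k * M j l = M i l * M j k) : ∃ u w, vecMulVec u w = M := by
  by_cases hM : M = 0
  · exact ⟨0, 0, by simp [hM]⟩
  obtain ⟨i, j, hij⟩ : ∃ i j, M i j ≠ 0 := by
    by_contra! h0
    exact hM (Matrix.ext h0)
  refine ⟨fun k ↦ M k j / M i j, M i, Matrix.ext fun k l ↦ ?_⟩
  rw [vecMulVec_apply, div_mul_eq_mul_div, div_eq_iff hij, h]

theorem exists_vecMulVec_eq_of_det_eq_zero (M : Matrix (Fin 2) (Fin 2) K) (h : M.det = 0) :
    ∃ u w, vecMulVec u w = M := by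
  rw [det_fin_two] at h
  refine M.exists_vecMulVec_eq_of_mul_eq_mul fun i j k l ↦ ?_
  fin_cases i <;> fin_cases j <;> fin_cases k <;> fin_cases l <;> simp <;>
    first | ring1 | linear_combination h | linear_combination -h

theorem exists_unit_smul_of_vecMulVec_eq {u₀ u : m → K} {w₀ w : n → K}
    (hM : vecMulVec u₀ w₀ ≠ 0) (h : vecMulVec u w = vecMulVec u₀ w₀) :
    ∃ t : Kˣ, u = t • u₀ ∧ w = t⁻¹ • w₀ := by
  obtain ⟨i, j, hij⟩ : ∃ i j, vecMulVec u₀ w₀ i j ≠ 0 := by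
    by_contra! h0
    exact hM (Matrix.ext h0)
  have hentry (k l) : u k * w l = u₀ k * w₀ l := by
    simpa only [vecMulVec_apply] using congrFun (congrFun h k) l
  rw [vecMulVec_apply] at hij
  have hu₀ : u₀ i ≠ 0 := left_ne_zero_of_mul hij
  have hw : w j ≠ 0 := right_ne_zero_of_mul (hentry i j ▸ hij)
  have hu : u i ≠ 0 := left_ne_zero_of_mul (hentry i j ▸ hij)
  refine ⟨Units.mk0 (u i / u₀ i) (div_ne_zero hu hu₀), funext fun k ↦ ?_, funext fun l ↦ ?_⟩ <;>
    simp only [Pi.smul_apply, Units.smul_def, smul_eq_mul, Units.val_inv_eq_inv_val,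
      Units.val_mk0, inv_div, div_mul_eq_mul_div]
  · rw [eq_div_iff hu₀]
    apply mul_right_cancel₀ hw
    linear_combination u₀ i * hentry k j - u₀ k * hentry i j
  · rw [eq_div_iff hu]
    linear_combination hentry i l

theorem card_vecMulVec_eq {M : Matrix m n K} (hM : M ≠ 0) (hex : ∃ u w, vecMulVec u w = M) :
    Nat.card {p : (m → K) × (n → K) // vecMulVec p.1 p.2 = M} = Nat.card Kˣ := by
  obtain ⟨u₀, w₀, rfl⟩ := hex
  have hu₀ : u₀ ≠ 0 := by rintro rfl; simp at hM
  let f (t : Kˣ) : {p : (m → K) × (n → K) // vecMulVec p.1 p.2 = vecMulVec u₀ w₀} :=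
    ⟨(t • u₀, t⁻¹ • w₀), by
      rw [smul_vecMulVec, vecMulVec_smul, smul_smul, mul_inv_cancel, one_smul]⟩
  refine (Nat.card_congr (Equiv.ofBijective f ⟨fun t s hts ↦ ?_, fun ⟨p, hp⟩ ↦ ?_⟩)).symm
  · have : (t : K) • u₀ = (s : K) • u₀ := congrArg (·.1.1) hts
    exact Units.ext (smul_left_injective K hu₀ this)
  · obtain ⟨t, ht₁, ht₂⟩ := exists_unit_smul_of_vecMulVec_eq hM hp
    exact ⟨t, Subtype.ext (Prod.ext ht₁.symm ht₂.symm)⟩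

theorem card_vecMulVec_eq_zero [Finite K] [Finite n] :
    Nat.card {p : (n → K) × (n → K) // p ≠ 0 ∧ vecMulVec p.1 p.2 = 0} =
      2 * Nat.card {u : n → K // u ≠ 0} := by
  let f : {u : n → K // u ≠ 0} ⊕ {w : n → K // w ≠ 0} →
      {p : (n → K) × (n → K) // p ≠ 0 ∧ vecMulVec p.1 p.2 = 0} :=
    Sum.elim (fun u ↦ ⟨(u, 0), by simp [u.2]⟩) (fun w ↦ ⟨(0, w), by simp [w.2]⟩)
  have hf : Function.Bijective f := by
    refine ⟨?_, fun ⟨⟨u, w⟩, hp, h⟩ ↦ ?_⟩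
    · rintro (⟨u, hu⟩ | ⟨w, hw⟩) (⟨u', hu'⟩ | ⟨w', hw'⟩) h <;> simp_all [f]
    · rcases vecMulVec_eq_zero.mp h with rfl | rfl
      · exact ⟨.inr ⟨w, by simpa using hp⟩, rfl⟩
      · exact ⟨.inl ⟨u, by simpa using hp⟩, rfl⟩
  rw [← Nat.card_congr (Equiv.ofBijective f hf), Nat.card_sum, two_mul]

end Matrix

section Satake

variable {F : Type*} [Field F]

def satakeMatrix (Y : Fin 4 → F) : Matrix (Fin 2) (Fin 2) F :=
  !![(Y 2 ^ 2 + Y 3 ^ 2) / 4, (Y 0 ^ 2 + Y 1 ^ 2) / 4;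
    (Y 0 ^ 2 - Y 1 ^ 2) / 4, (Y 3 ^ 2 - Y 2 ^ 2) / 4]

def satakeCoords : (Fin 8 → F) ≃ (Fin 4 → F) × (Fin 2 → F) × (Fin 2 → F) where
  toFun v := (![v 0, v 1, v 2, v 3], ![v 4, v 5], ![v 6, v 7])
  invFun p := ![p.1 0, p.1 1, p.1 2, p.1 3, p.2.1 0, p.2.1 1, p.2.2 0, p.2.2 1]
  left_inv v := by ext i; fin_cases i <;> rfl
  right_inv p := by ext i <;> fin_cases i <;> rfl

theorem satakeCoords_eq_zero_iff {v : Fin 8 → F} : satakeCoords v = 0 ↔ v = 0 :=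
  satakeCoords.injective.eq_iff' (by ext i <;> fin_cases i <;> rfl)

theorem satakeCond_iff (h2 : (2 : F) ≠ 0) (v : Fin 8 → F) :
    SatakeCond v ↔
      vecMulVec (satakeCoords v).2.1 (satakeCoords v).2.2 = satakeMatrix (satakeCoords v).1 := by
  have h4 : (4 : F) ≠ 0 := by simpa [show (4 : F) = 2 ^ 2 by norm_num] using h2
  simp only [SatakeCond, satakeCoords, satakeMatrix, ← Matrix.ext_iff, Fin.forall_fin_two,
    vecMulVec_apply, Equiv.coe_fn_mk, of_apply, cons_val, cons_val', empty_val', cons_val_fin_one,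
    eq_div_iff h4]
  constructor
  · rintro ⟨h₀, h₁, h₂, h₃⟩
    exact ⟨⟨by linear_combination -h₂ - h₃, by linear_combination -h₀ - h₁⟩,
      by linear_combination h₁ - h₀, by linear_combination h₂ - h₃⟩
  · rintro ⟨⟨e₀₀, e₀₁⟩, e₁₀, e₁₁⟩
    refine ⟨?_, ?_, ?_, ?_⟩ <;> apply mul_left_cancel₀ h2
    · linear_combination -e₀₁ - e₁₀
    · linear_combination e₁₀ - e₀₁
    · linear_combination e₁₁ - e₀₀
    · linear_combination -e₀₀ - e₁₁

theorem satakeCond_smul (t : F) {v : Fin 8 → F} (h : SatakeCond v) : SatakeCond (t • v) := by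
  obtain ⟨h₀, h₁, h₂, h₃⟩ := h
  refine ⟨?_, ?_, ?_, ?_⟩ <;> simp only [Pi.smul_apply, smul_eq_mul]
  · linear_combination t ^ 2 * h₀
  · linear_combination t ^ 2 * h₁
  · linear_combination t ^ 2 * h₂
  · linear_combination t ^ 2 * h₃

theorem fermatCond_smul (t : F) {z : Fin 4 → F} (h : FermatCond z) : FermatCond (t • z) := by
  unfold FermatCond at h ⊢
  simp only [Pi.smul_apply, smul_eq_mul]
  linear_combination t ^ 4 * h

theorem det_satakeMatrix_eq_zero_iff (h2 : (2 : F) ≠ 0) (Y : Fin 4 → F) :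
    (satakeMatrix Y).det = 0 ↔ FermatCond Y := by
  have h4 : (4 : F) ≠ 0 := by simpa [show (4 : F) = 2 ^ 2 by norm_num] using h2
  rw [satakeMatrix, det_fin_two_of, div_mul_div_comm, div_mul_div_comm, ← sub_div,
    div_eq_zero_iff, or_iff_left (mul_ne_zero h4 h4), FermatCond]
  constructor <;> intro h <;> linear_combination -h

theorem satakeMatrix_eq_zero_iff (h2 : (2 : F) ≠ 0) {Y : Fin 4 → F} :
    satakeMatrix Y = 0 ↔ Y = 0 := by
  refine ⟨fun h ↦ ?_, by rintro rfl; ext i j; fin_cases i <;> fin_cases j <;> simp [satakeMatrix]⟩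
  have h4 : (4 : F) ≠ 0 := by simpa [show (4 : F) = 2 ^ 2 by norm_num] using h2
  have entry (i j : Fin 2) : satakeMatrix Y i j = 0 := by rw [h]; rfl
  have e₀₀ := entry 0 0
  have e₀₁ := entry 0 1
  have e₁₀ := entry 1 0
  have e₁₁ := entry 1 1
  simp only [satakeMatrix, of_apply, cons_val', cons_val_zero, cons_val_one, empty_val',
    cons_val_fin_one, div_eq_zero_iff, h4, or_false] at e₀₀ e₀₁ e₁₀ e₁₁
  have sq_eq_zero {a : F} (ha : 2 * a ^ 2 = 0) : a = 0 := by simpa [h2] using ha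
  ext i
  fin_cases i
  · exact sq_eq_zero (a := Y 0) (by linear_combination e₀₁ + e₁₀)
  · exact sq_eq_zero (a := Y 1) (by linear_combination e₀₁ - e₁₀)
  · exact sq_eq_zero (a := Y 2) (by linear_combination e₀₀ - e₁₁)
  · exact sq_eq_zero (a := Y 3) (by linear_combination e₀₀ + e₁₁)

open Classical in
theorem card_satakeFiber [Finite F] (h2 : (2 : F) ≠ 0) (Y : Fin 4 → F) :
    Nat.card {p : (Fin 2 → F) × (Fin 2 → F) // (Y, p) ≠ 0 ∧ vecMulVec p.1 p.2 = satakeMatrix Y} =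
      if Y = 0 then 2 * Nat.card {u : Fin 2 → F // u ≠ 0}
      else if FermatCond Y then Nat.card Fˣ else 0 := by
  split_ifs with hY hF
  · subst hY
    have h0 : satakeMatrix (0 : Fin 4 → F) = 0 := (satakeMatrix_eq_zero_iff h2).mpr rfl
    rw [← card_vecMulVec_eq_zero]
    exact Nat.card_congr (Equiv.subtypeEquivRight fun p ↦ by simp [h0])
  · have hM : satakeMatrix Y ≠ 0 := (satakeMatrix_eq_zero_iff h2).not.mpr hY
    have hex := exists_vecMulVec_eq_of_det_eq_zero _ ((det_satakeMatrix_eq_zero_iff h2 Y).mpr hF)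
    simp only [ne_eq, Prod.mk_eq_zero, hY, false_and, not_false_eq_true, true_and]
    exact card_vecMulVec_eq hM hex
  · refine Nat.card_eq_zero.mpr (.inl ⟨fun ⟨p, _, hp⟩ ↦ hF ?_⟩)
    rw [← det_satakeMatrix_eq_zero_iff h2, ← hp, det_vecMulVec]

theorem card_satake_cone [Fintype F] (h2 : (2 : F) ≠ 0) :
    Nat.card {v : Fin 8 → F // v ≠ 0 ∧ SatakeCond v} =
      2 * Nat.card {u : Fin 2 → F // u ≠ 0} +
        Nat.card {Y : Fin 4 → F // Y ≠ 0 ∧ FermatCond Y} * Nat.card Fˣ := by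
  classical
  let e := (Equiv.subtypeEquiv (p := fun v ↦ v ≠ 0 ∧ SatakeCond v)
      (q := fun q : (Fin 4 → F) × (Fin 2 → F) × (Fin 2 → F) ↦
        q ≠ 0 ∧ vecMulVec q.2.1 q.2.2 = satakeMatrix q.1) satakeCoords fun v ↦ by
      rw [satakeCond_iff h2, ne_eq, ← satakeCoords_eq_zero_iff]).trans
    (Equiv.subtypeProdEquivSigmaSubtype fun (Y : Fin 4 → F) (p : (Fin 2 → F) × (Fin 2 → F)) ↦
      (Y, p) ≠ 0 ∧ vecMulVec p.1 p.2 = satakeMatrix Y)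
  rw [Nat.card_congr e, Nat.card_sigma]
  simp only [card_satakeFiber h2]
  rw [Finset.sum_ite, Finset.sum_ite, Finset.filter_eq', if_pos (Finset.mem_univ _),
    Finset.sum_singleton, Finset.sum_const, Finset.sum_const_zero, add_zero, smul_eq_mul,
    Finset.filter_filter, Nat.card_eq_fintype_card (α := {Y // Y ≠ 0 ∧ FermatCond Y}),
    Fintype.card_subtype]

end Satake

/-- For every finite field `F` of odd cardinality `q`,
`|Z(𝔽_q)| = (q - 1)·|F(𝔽_q)| + 2q + 2`. -/
theorem satake_point_count (F : Type) [Field F] [Fintype F] (hodd : ringChar F ≠ 2) :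
    (Nat.card {p : ℙ F (Fin 8 → F) // SatakeCond p.rep} : ℤ) =
      ((Fintype.card F : ℤ) - 1) * Nat.card {p : ℙ F (Fin 4 → F) // FermatCond p.rep} +
        2 * (Fintype.card F : ℤ) + 2 := by
  have hcone := card_satake_cone (Ring.two_ne_zero hodd)
  rw [card_nonzero_subtype (k := F) SatakeCond fun t _ h ↦ satakeCond_smul (t : F) h,
    card_nonzero_subtype (k := F) FermatCond fun t _ h ↦ fermatCond_smul (t : F) h,
    Nat.card_congr (nonZeroEquivProjectivizationProdUnits F (Fin 2 → F)), Nat.card_prod,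
    card_of_finrank_two F _ (Module.finrank_fin_fun F)] at hcone
  have hZ : Nat.card {p : ℙ F (Fin 8 → F) // SatakeCond p.rep} =
      2 * (Nat.card F + 1) + Nat.card {p : ℙ F (Fin 4 → F) // FermatCond p.rep} * Nat.card Fˣ :=
    Nat.eq_of_mul_eq_mul_right Nat.card_pos (by rw [hcone]; ring)
  rw [hZ, ← Nat.card_eq_fintype_card, Nat.card_eq_card_units_add_one F]
  push_cast
  ring
end

section
/- For every odd prime p, the number of 𝔽_p-rational points of the Fermat quartic surface F equals p² + 1 + 9p + 7·χ(−1)·p + 2·χ(2)·p + 2·χ(−2)·p + a_p, where a_p = 0 if p ≡ 3 (mod 4), and a_p = (∑_{x ∈ 𝔽_p} χ(x³ − x))² − 2p if p ≡ 1 (mod 4). -/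
open scoped LinearAlgebra.Projectivization

/-!
Writing `χ` for the quadratic character of `F = 𝔽_q` and substituting `x = a²` (which weights a
sum by `1 + χ x`), the number `L s` of solutions of `a⁴ - b⁴ = s` becomes a weighted count on the
conic `x² - y² = s`:
`L s = N s + W s + W (-s) + D s = N s + (1 + χ 2) W s + D s`, where `N s` counts the points of
the conic, `W s = ∑ₓ χ(x³ - s x)` and `D s = ∑_{x² - y² = s} χ(x y)`.
The affine cone over the surface has `∑ₛ L s L (-s)` points. In the resulting sums over `s`, the
mixed terms `∑ D W` vanish because `D (l² s) = D s` while `W (l² s) = χ l W s`; the squares are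
evaluated by orthogonality, `∑ₛ χ((s - v)(s - w)) = q [v = w] - 1`, and by the parametrization
`r = x + y` of the conic, which gives `D s = χ s W 1 - 1 - χ(-1)` for `s ≠ 0`. Removing the origin
and dividing by `q - 1` gives the projective count; for `q ≡ 3 (mod 4)`, `χ(-1) = -1` forces
`W = 0`.
-/

open Finset

def finFourArrowEquiv (α : Type*) : (Fin 4 → α) ≃ α × α × α × α where
  toFun z := (z 0, z 1, z 2, z 3)
  invFun w := ![w.1, w.2.1, w.2.2.1, w.2.2.2]
  left_inv z := by ext i; fin_cases i <;> rfl
  right_inv w := rfl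

lemma Nat.card_subtype_and_ne_add_one {α : Type*} [Finite α] (p : α → Prop) {a : α}
    (ha : p a) :
    Nat.card {x // p x ∧ x ≠ a} + 1 = Nat.card {x // p x} := by
  have h := Set.ncard_sdiff_singleton_add_one (s := {x | p x}) ha
  rwa [← Nat.card_coe_set_eq, ← Nat.card_coe_set_eq] at h

namespace Projectivization

variable {k V : Type*} [DivisionRing k] [AddCommGroup V] [Module k V]

lemma card_subtype_and_ne_zero (C : V → Prop) (hC : ∀ (a : kˣ) (v : V), C (a • v) ↔ C v) :
    Nat.card {v : V // C v ∧ v ≠ 0} = Nat.card {P : ℙ k V // C P.rep} * Nat.card kˣ := by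
  rw [← Nat.card_prod]
  symm
  refine Nat.card_eq_of_bijective
    (fun Pa =>
      ⟨Pa.2 • Pa.1.1.rep, (hC _ _).2 Pa.1.2, (smul_ne_zero_iff_ne _).2 Pa.1.1.rep_nonzero⟩)
    ⟨?_, ?_⟩
  · rintro ⟨⟨P, hP⟩, a⟩ ⟨⟨Q, hQ⟩, b⟩ h
    have h : a • P.rep = b • Q.rep := congrArg Subtype.val h
    obtain rfl : P = Q := by
      rw [← P.mk_rep, ← Q.mk_rep, mk_eq_mk_iff]
      exact ⟨a⁻¹ * b, by rw [mul_smul, ← h, inv_smul_smul]⟩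
    obtain rfl : a = b := Units.ext (smul_left_injective k P.rep_nonzero h)
    rfl
  · rintro ⟨v, hv, hv0⟩
    obtain ⟨a, ha⟩ := exists_smul_eq_mk_rep k v hv0
    exact ⟨⟨⟨mk k v hv0, by rw [← ha]; exact (hC a v).2 hv⟩, a⁻¹⟩,
      Subtype.ext (by simp only [← ha, inv_smul_smul])⟩

end Projectivization

lemma FermatCond_smul {F : Type*} [Field F] (a : Fˣ) (z : Fin 4 → F) :
    FermatCond (a • z) ↔ FermatCond z := by
  have h : (a • z) 0 ^ 4 - (a • z) 1 ^ 4 + (a • z) 2 ^ 4 - (a • z) 3 ^ 4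
      = (a : F) ^ 4 * (z 0 ^ 4 - z 1 ^ 4 + z 2 ^ 4 - z 3 ^ 4) := by
    simp only [Pi.smul_apply, Units.smul_def, smul_eq_mul]
    ring
  rw [FermatCond, FermatCond, h, mul_eq_zero, or_iff_right (pow_ne_zero 4 a.ne_zero)]

def cubicCharSum (F : Type*) [Field F] [Fintype F] [DecidableEq F] (s : F) : ℤ :=
  ∑ x : F, quadraticChar F (x ^ 3 - s * x)

def hyperbolaCharSum (F : Type*) [Field F] [Fintype F] [DecidableEq F] (s : F) : ℤ :=
  ∑ x : F, ∑ y : F, if x ^ 2 - y ^ 2 = s then quadraticChar F (x * y) else 0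

def hyperbolaCount (F : Type*) [Field F] [Fintype F] [DecidableEq F] (s : F) : ℤ :=
  ∑ x : F, ∑ y : F, if x ^ 2 - y ^ 2 = s then 1 else 0

def quarticDiffCount (F : Type*) [Field F] [Fintype F] [DecidableEq F] (s : F) : ℤ :=
  ∑ a : F, ∑ b : F, if a ^ 4 - b ^ 4 = s then 1 else 0

section FiniteField

variable {F : Type*} [Field F] [Fintype F] [DecidableEq F]

local notation "χ" => quadraticChar F
local notation "q" => (Fintype.card F : ℤ)
local notation "W" => cubicCharSum F
local notation "D" => hyperbolaCharSum F
local notation "N" => hyperbolaCount F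
local notation "L" => quarticDiffCount F

lemma quadraticChar_sum_sq : ∑ x : F, χ (x ^ 2) = q - 1 := by
  have h (x : F) : χ (x ^ 2) = 1 - if x = 0 then 1 else 0 := by
    rcases eq_or_ne x 0 with rfl | hx
    · simp
    · simp [quadraticChar_sq_one' hx, hx]
  simp [h, sum_sub_distrib]

lemma quadraticChar_sum_sub (hF : ringChar F ≠ 2) (a : F) : ∑ s : F, χ (s - a) = 0 :=
  (Fintype.sum_equiv (Equiv.subRight a) _ (fun u => χ u) fun _ => rfl).trans
    (quadraticChar_sum_zero hF)

lemma quadraticChar_sum_sum_mul (hF : ringChar F ≠ 2) : ∑ x : F, ∑ y : F, χ (x * y) = 0 := by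
  simp only [map_mul, ← mul_sum, quadraticChar_sum_zero hF, mul_zero, sum_const_zero]

lemma quadraticChar_sum_ite_sq_eq (hF : ringChar F ≠ 2) (t : F) (c : ℤ) :
    ∑ x : F, (if x ^ 2 = t then c else 0) = (χ t + 1) * c := by
  rw [sum_ite, sum_const_zero, add_zero, sum_const, nsmul_eq_mul,
    ← quadraticChar_card_sqrts hF t, Set.toFinset_ofPred]

lemma quadraticChar_sum_comp_sq (hF : ringChar F ≠ 2) (f : F → ℤ) :
    ∑ x : F, f (x ^ 2) = ∑ y : F, (χ y + 1) * f y := by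
  rw [← sum_fiberwise' univ (fun x : F => x ^ 2) f]
  refine sum_congr rfl fun y _ => ?_
  rw [sum_const, nsmul_eq_mul, ← quadraticChar_card_sqrts hF y, Set.toFinset_ofPred]

lemma quadraticChar_sum_mul_one_sub (hF : ringChar F ≠ 2) :
    ∑ x : F, χ x * χ (1 - x) = -χ (-1) := by
  have h := jacobiSum_nontrivial_inv (quadraticChar_ne_one hF)
  rwa [(quadraticChar_isQuadratic F).inv, jacobiSum] at h

lemma quadraticChar_sum_sub_mul_sub (hF : ringChar F ≠ 2) (v w : F) :
    ∑ s : F, χ ((s - v) * (s - w)) = if v = w then q - 1 else -1 := by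
  rcases eq_or_ne v w with rfl | h
  · rw [if_pos rfl, ← quadraticChar_sum_sq]
    exact Fintype.sum_equiv (Equiv.subRight v) _ _ fun s => by simp [sq]
  · rw [if_neg h]
    have hwv : w - v ≠ 0 := sub_ne_zero.mpr h.symm
    -- `s = v + (w - v) u` turns `(s - v) (s - w)` into `-(w - v)² u (1 - u)`
    let e := (Equiv.mulLeft₀ (w - v) hwv).trans (Equiv.addLeft v)
    have he (u : F) : χ ((e u - v) * (e u - w)) = χ (-1) * (χ u * χ (1 - u)) := by
      have : (e u - v) * (e u - w) = -1 * (w - v) ^ 2 * (u * (1 - u)) := by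
        simp only [e, Equiv.trans_apply, Equiv.mulLeft₀_apply, Equiv.coe_addLeft]; ring
      rw [this, map_mul, map_mul, map_mul, quadraticChar_sq_one' hwv, mul_one]
    rw [← Fintype.sum_equiv e _ _ fun u => rfl, sum_congr rfl fun u _ => he u, ← mul_sum,
      quadraticChar_sum_mul_one_sub hF, mul_neg, ← sq,
      quadraticChar_sq_one (neg_ne_zero.mpr one_ne_zero)]

lemma quadraticChar_sum_sq_sub (hF : ringChar F ≠ 2) (t : F) :
    ∑ x : F, χ (x ^ 2 - t) = if t = 0 then q - 1 else -1 := by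
  have h (y : F) : (χ y + 1) * χ (y - t) = χ ((y - 0) * (y - t)) + χ (y - t) := by
    rw [sub_zero, map_mul]; ring
  rw [quadraticChar_sum_comp_sq hF (fun y => χ (y - t)), sum_congr rfl fun y _ => h y,
    sum_add_distrib, quadraticChar_sum_sub_mul_sub hF, quadraticChar_sum_sub hF, add_zero]
  simp only [eq_comm]

lemma quadraticChar_of_sq_eq_neg_one (hF : ringChar F ≠ 2) {i : F} (hi : i ^ 2 = -1) :
    χ i = χ 2 := by
  have h2 : (2 : F) ≠ 0 := Ring.two_ne_zero hF
  have hi1 : 1 + i ≠ 0 := fun h => h2 (by linear_combination (1 - i) * h + hi)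
  have h := quadraticChar_sq_one' (F := F) hi1
  rw [show (1 + i) ^ 2 = 2 * i by linear_combination hi, map_mul] at h
  linear_combination (χ 2) * h - χ i * quadraticChar_sq_one h2

lemma sum_mul_eq_zero_of_scaling (hF : ringChar F ≠ 2) {f g : F → ℤ}
    (hf : ∀ l : F, l ≠ 0 → ∀ t, f (l ^ 2 * t) = f t)
    (hg : ∀ l : F, l ≠ 0 → ∀ t, g (l ^ 2 * t) = χ l * g t) : ∑ s : F, f s * g s = 0 := by
  obtain ⟨l, hl⟩ := quadraticChar_exists_neg_one hF
  have hl0 : l ≠ 0 := by rintro rfl; simp at hl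
  have h := Fintype.sum_equiv (Equiv.mulLeft₀ (l ^ 2) (pow_ne_zero 2 hl0))
    (fun s => f (l ^ 2 * s) * g (l ^ 2 * s)) (fun s => f s * g s) fun _ => rfl
  simp only [hf l hl0, hg l hl0, hl, neg_one_mul, mul_neg, sum_neg_distrib] at h
  linarith

lemma cubicCharSum_mul_sq {l : F} (hl : l ≠ 0) (t : F) : W (l ^ 2 * t) = χ l * W t := by
  have h (y : F) : χ ((l * y) ^ 3 - l ^ 2 * t * (l * y)) = χ l * χ (y ^ 3 - t * y) := by
    rw [show (l * y) ^ 3 - l ^ 2 * t * (l * y) = l * l ^ 2 * (y ^ 3 - t * y) by ring,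
      map_mul, map_mul, quadraticChar_sq_one' hl, mul_one]
  rw [cubicCharSum, cubicCharSum, mul_sum,
    ← Fintype.sum_equiv (Equiv.mulLeft₀ l hl) _ _ fun y => rfl]
  exact sum_congr rfl fun y _ => h y

lemma quadraticChar_neg_one_mul_cubicCharSum (s : F) : χ (-1) * W s = W s := by
  rw [cubicCharSum, mul_sum, ← Equiv.sum_comp (Equiv.neg F)]
  refine sum_congr rfl fun x _ => ?_
  rw [← map_mul]
  congr 1
  simp only [Equiv.neg_apply]
  ring

lemma cubicCharSum_eq_zero_of_neg_one (h : χ (-1) = -1) (s : F) : W s = 0 := by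
  have := quadraticChar_neg_one_mul_cubicCharSum s
  rw [h] at this
  linarith

lemma cubicCharSum_zero (hF : ringChar F ≠ 2) : W 0 = 0 := by
  obtain ⟨l, hl⟩ := quadraticChar_exists_neg_one hF
  have hl0 : l ≠ 0 := by rintro rfl; simp at hl
  have h := cubicCharSum_mul_sq hl0 0
  rw [mul_zero, hl] at h
  linarith

lemma cubicCharSum_neg (hF : ringChar F ≠ 2) (s : F) : W (-s) = χ 2 * W s := by
  by_cases hsq : IsSquare (-1 : F)
  · obtain ⟨i, hi⟩ := hsq
    have hi0 : i ≠ 0 := by rintro rfl; simp at hi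
    rw [← quadraticChar_of_sq_eq_neg_one hF (by rw [sq, hi]), ← cubicCharSum_mul_sq hi0,
      sq, ← hi, neg_one_mul]
  · have hW := cubicCharSum_eq_zero_of_neg_one (quadraticChar_neg_one_iff_not_isSquare.mpr hsq)
    rw [hW, hW, mul_zero]

lemma sum_cubicCharSum (hF : ringChar F ≠ 2) : ∑ s : F, W s = 0 := by
  simp only [cubicCharSum]
  rw [sum_comm]
  refine sum_eq_zero fun x _ => ?_
  have h (s : F) : χ (x ^ 3 - s * x) = χ (-x) * χ (s - x ^ 2) := by
    rw [← map_mul]; ring_nf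
  rw [sum_congr rfl fun s _ => h s, ← mul_sum, quadraticChar_sum_sub hF, mul_zero]

lemma hyperbolaCharSum_zero (hF : ringChar F ≠ 2) : D 0 = (q - 1) * (1 + χ (-1)) := by
  have h (x : F) :
      (∑ y : F, if x ^ 2 - y ^ 2 = 0 then χ (x * y) else 0) = χ (x ^ 2) * (1 + χ (-1)) := by
    rcases eq_or_ne x 0 with rfl | hx
    · simp
    have hfib : univ.filter (fun y : F => x ^ 2 - y ^ 2 = 0) = {x, -x} := by
      ext y
      rw [mem_filter, sub_eq_zero, eq_comm, sq_eq_sq_iff_eq_or_eq_neg]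
      simp
    have hne : x ≠ -x := fun h => hx ((Ring.eq_self_iff_eq_zero_of_char_ne_two hF).mp h.symm)
    rw [← sum_filter, hfib, sum_pair hne, mul_neg, ← sq, neg_eq_neg_one_mul, map_mul]
    ring
  rw [hyperbolaCharSum, sum_congr rfl fun x _ => h x, ← sum_mul, quadraticChar_sum_sq]

lemma sum_hyperbolaCharSum (hF : ringChar F ≠ 2) : ∑ s : F, D s = 0 := by
  simp only [hyperbolaCharSum]
  rw [sum_comm]
  refine (sum_congr rfl fun x _ => ?_).trans (quadraticChar_sum_sum_mul hF)
  rw [sum_comm]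
  exact sum_congr rfl fun y _ => by rw [sum_ite_eq, if_pos (mem_univ _)]

lemma sum_cubicCharSum_sq (hF : ringChar F ≠ 2) :
    ∑ s : F, W s ^ 2 = q * (q - 1) * (1 + χ (-1)) := by
  have hexp (s : F) :
      W s ^ 2 = ∑ x : F, ∑ y : F, χ (x * y) * χ ((s - x ^ 2) * (s - y ^ 2)) := by
    rw [sq, cubicCharSum, sum_mul_sum]
    refine sum_congr rfl fun x _ => sum_congr rfl fun y _ => ?_
    simp only [← map_mul]
    ring_nf
  have hx (x y : F) : ∑ s : F, χ (x * y) * χ ((s - x ^ 2) * (s - y ^ 2))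
      = q * (if x ^ 2 - y ^ 2 = 0 then χ (x * y) else 0) - χ (x * y) := by
    rw [← mul_sum, quadraticChar_sum_sub_mul_sub hF]
    simp only [sub_eq_zero]
    split_ifs <;> ring
  rw [sum_congr rfl fun s _ => hexp s, sum_comm]
  rw [sum_congr rfl fun x _ => (sum_comm.trans (sum_congr rfl fun y _ => hx x y))]
  simp only [sum_sub_distrib, ← mul_sum]
  rw [quadraticChar_sum_sum_mul hF, ← hyperbolaCharSum, hyperbolaCharSum_zero hF]
  ring

-- `r = x + y` parametrizes the hyperbola `x² - y² = s`, since then `x - y = s / r`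
lemma sum_ite_sq_sub_sq_eq_sum_erase (hF : ringChar F ≠ 2) {s : F} (hs : s ≠ 0)
    (g : F → F → ℤ) :
    ∑ x : F, ∑ y : F, (if x ^ 2 - y ^ 2 = s then g x y else 0)
      = ∑ r ∈ univ.erase 0, g ((r + s / r) / 2) ((r - s / r) / 2) := by
  have h2 : (2 : F) ≠ 0 := Ring.two_ne_zero hF
  have hsum {p : F × F} (hp : p.1 ^ 2 - p.2 ^ 2 = s) : p.1 + p.2 ≠ 0 := fun h =>
    hs (by rw [← hp]; linear_combination (p.1 - p.2) * h)
  rw [← Fintype.sum_prod_type' (f := fun x y => if x ^ 2 - y ^ 2 = s then g x y else 0),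
    ← sum_filter]
  symm
  refine sum_nbij' (fun r => ((r + s / r) / 2, (r - s / r) / 2)) (fun p => p.1 + p.2)
    ?_ ?_ ?_ ?_ fun _ _ => rfl
  · intro r hr
    have hr0 : r ≠ 0 := ne_of_mem_erase hr
    simp only [mem_filter, mem_univ, true_and]
    field_simp
    ring
  · intro p hp
    simp only [mem_filter, mem_univ, true_and] at hp
    simpa using hsum hp
  · intro r _
    rw [← add_div, add_add_sub_cancel, ← two_mul, mul_div_cancel_left₀ r h2]
  · intro p hp
    simp only [mem_filter, mem_univ, true_and] at hp
    have hdiv : s / (p.1 + p.2) = p.1 - p.2 := by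
      rw [div_eq_iff (hsum hp)]; linear_combination -hp
    ext <;> simp only [hdiv] <;> field_simp <;> ring

lemma hyperbolaCharSum_of_ne_zero (hF : ringChar F ≠ 2) {s : F} (hs : s ≠ 0) :
    D s = χ s * W 1 - 1 - χ (-1) := by
  have hterm {r : F} (hr : r ≠ 0) :
      χ ((r + s / r) / 2 * ((r - s / r) / 2)) = χ (r ^ 4 - s ^ 2) := by
    have h2r : 2 * r ≠ 0 := mul_ne_zero (Ring.two_ne_zero hF) hr
    rw [show (r + s / r) / 2 * ((r - s / r) / 2) = (r ^ 4 - s ^ 2) * ((2 * r)⁻¹) ^ 2 by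
        field_simp; ring,
      map_mul, quadraticChar_sq_one' (inv_ne_zero h2r), mul_one]
  have hfull : ∑ r : F, χ (r ^ 4 - s ^ 2) = W (s ^ 2) - 1 := by
    have h (y : F) :
        (χ y + 1) * χ (y ^ 2 - s ^ 2) = χ (y ^ 3 - s ^ 2 * y) + χ (y ^ 2 - s ^ 2) := by
      rw [show y ^ 3 - s ^ 2 * y = y * (y ^ 2 - s ^ 2) by ring, map_mul]; ring
    calc ∑ r : F, χ (r ^ 4 - s ^ 2) = ∑ r : F, χ ((r ^ 2) ^ 2 - s ^ 2) :=
        sum_congr rfl fun r _ => by ring_nf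
      _ = ∑ y : F, (χ y + 1) * χ (y ^ 2 - s ^ 2) :=
        quadraticChar_sum_comp_sq hF (fun y => χ (y ^ 2 - s ^ 2))
      _ = W (s ^ 2) - 1 := by
        rw [sum_congr rfl fun y _ => h y, sum_add_distrib, quadraticChar_sum_sq_sub hF,
          if_neg (pow_ne_zero 2 hs)]
        rfl
  rw [hyperbolaCharSum, sum_ite_sq_sub_sq_eq_sum_erase hF hs, sum_congr rfl fun r hr =>
    hterm (ne_of_mem_erase hr), sum_erase_eq_sub (mem_univ 0), hfull,
    show (0 : F) ^ 4 - s ^ 2 = -1 * s ^ 2 by ring, map_mul, quadraticChar_sq_one' hs,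
    ← cubicCharSum_mul_sq hs 1, mul_one, mul_one]

lemma hyperbolaCharSum_mul_sq (hF : ringChar F ≠ 2) {l : F} (hl : l ≠ 0) (t : F) :
    D (l ^ 2 * t) = D t := by
  rcases eq_or_ne t 0 with rfl | ht
  · rw [mul_zero]
  rw [hyperbolaCharSum_of_ne_zero hF (mul_ne_zero (pow_ne_zero 2 hl) ht),
    hyperbolaCharSum_of_ne_zero hF ht, map_mul, quadraticChar_sq_one' hl, one_mul]

lemma sum_hyperbolaCharSum_sq (hF : ringChar F ≠ 2) :
    ∑ s : F, D s ^ 2 = q * (q - 1) * (1 + χ (-1)) ^ 2 + (q - 1) * W 1 ^ 2 := by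
  have h (s : F) (hs : s ∈ univ.erase 0) :
      D s ^ 2 = (W 1 ^ 2 + (1 + χ (-1)) ^ 2) - 2 * (1 + χ (-1)) * W 1 * χ s := by
    rw [hyperbolaCharSum_of_ne_zero hF (ne_of_mem_erase hs)]
    linear_combination W 1 ^ 2 * quadraticChar_sq_one (ne_of_mem_erase hs)
  rw [← add_sum_erase _ _ (mem_univ 0), sum_congr rfl h, sum_sub_distrib, sum_const, ← mul_sum,
    sum_erase_eq_sub (mem_univ 0), quadraticChar_sum_zero hF, quadraticChar_zero,
    card_erase_of_mem (mem_univ 0), card_univ, hyperbolaCharSum_zero hF, nsmul_eq_mul,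
    Nat.cast_sub Fintype.card_pos]
  push_cast
  ring

lemma sum_hyperbolaCharSum_mul_cubicCharSum (hF : ringChar F ≠ 2) : ∑ s : F, D s * W s = 0 :=
  sum_mul_eq_zero_of_scaling hF (fun _ hl t => hyperbolaCharSum_mul_sq hF hl t)
    (fun _ hl t => cubicCharSum_mul_sq hl t)

lemma quarticDiffCount_neg (s : F) : L (-s) = L s := by
  rw [quarticDiffCount, sum_comm]
  exact sum_congr rfl fun x _ => sum_congr rfl fun y _ =>
    if_congr ⟨fun h => by linear_combination -h, fun h => by linear_combination -h⟩ rfl rfl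

lemma sum_sum_ite_sq_sub_sq (hF : ringChar F ≠ 2) (s : F) (f : F → ℤ) :
    ∑ x : F, ∑ y : F, (if x ^ 2 - y ^ 2 = s then f x else 0)
      = ∑ x : F, (χ (x ^ 2 - s) + 1) * f x := by
  refine sum_congr rfl fun x _ => ?_
  rw [← quadraticChar_sum_ite_sq_eq hF]
  exact sum_congr rfl fun y _ =>
    if_congr ⟨fun h => by linear_combination -h, fun h => by linear_combination -h⟩ rfl rfl

lemma cubicCharSum_eq_sum (hF : ringChar F ≠ 2) (s : F) :
    W s = ∑ x : F, (χ (x ^ 2 - s) + 1) * χ x := by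
  have h (x : F) : (χ (x ^ 2 - s) + 1) * χ x = χ (x ^ 3 - s * x) + χ x := by
    rw [show x ^ 3 - s * x = (x ^ 2 - s) * x by ring, map_mul]; ring
  rw [sum_congr rfl fun x _ => h x, sum_add_distrib, quadraticChar_sum_zero hF, add_zero,
    cubicCharSum]

lemma hyperbolaCount_eq (hF : ringChar F ≠ 2) (s : F) :
    N s = q - 1 + if s = 0 then q else 0 := by
  rw [hyperbolaCount, sum_sum_ite_sq_sub_sq hF s (fun _ => 1)]
  simp only [mul_one, sum_add_distrib, quadraticChar_sum_sq_sub hF, sum_const, card_univ,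
    nsmul_eq_mul, mul_one]
  split_ifs <;> ring

lemma sum_hyperbolaCount_mul (hF : ringChar F ≠ 2) (g : F → ℤ) :
    ∑ s : F, N s * g s = (q - 1) * ∑ s : F, g s + q * g 0 := by
  simp only [hyperbolaCount_eq hF, add_mul, ite_mul, zero_mul, sum_add_distrib, ← mul_sum,
    sum_ite_eq', mem_univ, if_true]

lemma quarticDiffCount_eq_sum (hF : ringChar F ≠ 2) (s : F) :
    L s = ∑ x : F, ∑ y : F, (χ x + 1) * ((χ y + 1) * if x ^ 2 - y ^ 2 = s then 1 else 0) := by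
  have h4 (a : F) : a ^ 4 = (a ^ 2) ^ 2 := by ring
  simp only [quarticDiffCount, h4]
  rw [quadraticChar_sum_comp_sq hF (fun x => ∑ b : F, if x ^ 2 - (b ^ 2) ^ 2 = s then 1 else 0)]
  refine sum_congr rfl fun x _ => ?_
  rw [quadraticChar_sum_comp_sq hF (fun y => if x ^ 2 - y ^ 2 = s then 1 else 0), mul_sum]

lemma quarticDiffCount_eq (hF : ringChar F ≠ 2) (s : F) :
    L s = N s + (1 + χ 2) * W s + D s := by
  have hsplit (x y : F) : (χ x + 1) * ((χ y + 1) * if x ^ 2 - y ^ 2 = s then 1 else 0)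
      = (if x ^ 2 - y ^ 2 = s then 1 else 0) + (if x ^ 2 - y ^ 2 = s then χ x else 0)
        + (if x ^ 2 - y ^ 2 = s then χ y else 0)
        + (if x ^ 2 - y ^ 2 = s then χ (x * y) else 0) := by
    rw [map_mul]
    split_ifs <;> ring
  have hsnd : ∑ x : F, ∑ y : F, (if x ^ 2 - y ^ 2 = s then χ y else 0) = W (-s) := by
    rw [sum_comm, cubicCharSum_eq_sum hF, ← sum_sum_ite_sq_sub_sq hF]
    exact sum_congr rfl fun y _ => sum_congr rfl fun x _ =>
      if_congr ⟨fun h => by linear_combination -h, fun h => by linear_combination -h⟩ rfl rfl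
  rw [quarticDiffCount_eq_sum hF, sum_congr rfl fun x _ => sum_congr rfl fun y _ => hsplit x y]
  simp only [sum_add_distrib]
  rw [← hyperbolaCount, sum_sum_ite_sq_sub_sq hF s (fun x => χ x), ← cubicCharSum_eq_sum hF,
    hsnd, cubicCharSum_neg hF, ← hyperbolaCharSum]
  ring

lemma sum_quarticDiffCount_mul_neg (hF : ringChar F ≠ 2) :
    ∑ s : F, L s * L (-s)
      = 1 + (q - 1) *
        ((q + 1) ^ 2 + 6 * q * (1 + χ (-1)) + 2 * q * (χ 2 + χ (-2)) + W 1 ^ 2) := by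
  have hexp (s : F) : L s * L (-s) = N s * N s + 2 * (N s * D s) + (1 + χ 2) ^ 2 * W s ^ 2
      + D s ^ 2 + 2 * (1 + χ 2) * (N s * W s) + 2 * (1 + χ 2) * (D s * W s) := by
    rw [quarticDiffCount_neg, quarticDiffCount_eq hF]
    ring
  have hN := sum_hyperbolaCount_mul hF fun _ => 1
  simp only [mul_one, sum_const, card_univ, nsmul_eq_mul] at hN
  simp only [hexp, sum_add_distrib, ← mul_sum, sum_hyperbolaCount_mul hF, hN,
    sum_cubicCharSum hF, cubicCharSum_zero hF, sum_hyperbolaCharSum hF, hyperbolaCharSum_zero hF,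
    sum_cubicCharSum_sq hF, sum_hyperbolaCharSum_sq hF, sum_hyperbolaCharSum_mul_cubicCharSum hF]
  rw [hyperbolaCount_eq hF 0, if_pos rfl]
  have h2 : χ 2 ^ 2 = 1 := quadraticChar_sq_one (Ring.two_ne_zero hF)
  have he : χ (-1) ^ 2 = 1 := quadraticChar_sq_one (neg_ne_zero.mpr one_ne_zero)
  have hm2 : χ (-2) = χ (-1) * χ 2 := by rw [← map_mul]; norm_num
  linear_combination
    (q * (q - 1) * (1 + χ (-1))) * h2 + q * (q - 1) * he - 2 * q * (q - 1) * hm2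

lemma sum_quarticDiffCount_mul (h : F → ℤ) :
    ∑ s : F, L s * h s = ∑ a : F, ∑ b : F, h (a ^ 4 - b ^ 4) := by
  simp only [quarticDiffCount, sum_mul, ite_mul, one_mul, zero_mul]
  rw [sum_comm]
  refine sum_congr rfl fun a _ => ?_
  rw [sum_comm]
  exact sum_congr rfl fun b _ => by rw [sum_ite_eq, if_pos (mem_univ _)]

lemma card_fermatCond_eq_sum :
    (Nat.card {z : Fin 4 → F // FermatCond z} : ℤ) = ∑ s : F, L s * L (-s) := by
  classical
  rw [sum_quarticDiffCount_mul, Nat.card_eq_fintype_card, Fintype.card_subtype, card_filter,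
    Nat.cast_sum, ← (finFourArrowEquiv F).symm.sum_comp]
  simp only [Fintype.sum_prod_type, quarticDiffCount]
  refine sum_congr rfl fun a _ => sum_congr rfl fun b _ => sum_congr rfl fun c _ =>
    sum_congr rfl fun d _ => ?_
  rw [Nat.cast_ite, Nat.cast_one, Nat.cast_zero]
  refine if_congr ?_ rfl rfl
  change a ^ 4 - b ^ 4 + c ^ 4 - d ^ 4 = 0 ↔ _
  exact ⟨fun h => by linear_combination h, fun h => by linear_combination h⟩

lemma card_fermatCond_eq_one_add :
    (Nat.card {z : Fin 4 → F // FermatCond z} : ℤ)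
      = 1 + (q - 1) * Nat.card {P : ℙ F (Fin 4 → F) // FermatCond P.rep} := by
  rw [← Nat.card_subtype_and_ne_add_one _ (by simp [FermatCond] : FermatCond (0 : Fin 4 → F)),
    Projectivization.card_subtype_and_ne_zero _ (FermatCond_smul (F := F)),
    Nat.card_eq_fintype_card (α := Fˣ), Fintype.card_units, Nat.cast_add, Nat.cast_mul,
    Nat.cast_sub Fintype.card_pos]
  push_cast
  ring

lemma card_fermatCond_projective (hF : ringChar F ≠ 2) :
    (Nat.card {P : ℙ F (Fin 4 → F) // FermatCond P.rep} : ℤ)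
      = (q + 1) ^ 2 + 6 * q * (1 + χ (-1)) + 2 * q * (χ 2 + χ (-2)) + cubicCharSum F 1 ^ 2 := by
  have h := card_fermatCond_eq_one_add.symm.trans
    (card_fermatCond_eq_sum.trans (sum_quarticDiffCount_mul_neg hF))
  have hq : q - 1 ≠ 0 := sub_ne_zero.mpr (by exact_mod_cast Fintype.one_lt_card.ne')
  exact mul_left_cancel₀ hq (by linarith)

end FiniteField

/-- For every odd prime `p`, writing `χ` for the quadratic residue character of `𝔽_p`,
`|F(𝔽_p)| = p² + 1 + 9p + 7χ(-1)p + 2χ(2)p + 2χ(-2)p + a_p`, where `a_p = 0` if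
`p ≡ 3 (mod 4)` and `a_p = (∑_{x ∈ 𝔽_p} χ(x³ - x))² - 2p` if `p ≡ 1 (mod 4)`. -/
theorem fermat_point_count (p : ℕ) [Fact p.Prime] (hodd : p ≠ 2) :
    (Nat.card {P : ℙ (ZMod p) (Fin 4 → ZMod p) // FermatCond P.rep} : ℤ) =
      (p : ℤ) ^ 2 + 1 + 9 * p + 7 * quadraticChar (ZMod p) (-1) * p +
        2 * quadraticChar (ZMod p) 2 * p + 2 * quadraticChar (ZMod p) (-2) * p +
        (if p % 4 = 3 then 0
          else (∑ x : ZMod p, quadraticChar (ZMod p) (x ^ 3 - x)) ^ 2 - 2 * p) := by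
  have hF : ringChar (ZMod p) ≠ 2 := by rwa [ZMod.ringChar_zmod_n]
  have hW : cubicCharSum (ZMod p) 1 = ∑ x : ZMod p, quadraticChar (ZMod p) (x ^ 3 - x) := by
    simp only [cubicCharSum, one_mul]
  have hχ := quadraticChar_neg_one hF
  rw [card_fermatCond_projective hF, ← hW, ZMod.card]
  rw [ZMod.card] at hχ
  rcases Nat.odd_mod_four_iff.mp (Nat.odd_iff.mp ((Fact.out : p.Prime).odd_of_ne_two hodd))
    with h4 | h4
  · rw [if_neg (by omega), hχ, ZMod.χ₄_nat_one_mod_four h4]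
    ring
  · rw [ZMod.χ₄_nat_three_mod_four h4] at hχ
    rw [if_pos h4, hχ, cubicCharSum_eq_zero_of_neg_one hχ]
    ring
end
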